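/- Let r ≥ 3 and n ∈ ℕ, and let G be an r-partite graph on parts (V_1,...,V_r) of size n with minimum cross-degree at least (1 − δ)n where 0 ≤ δ ≤ 1/(2r). Then the number k of r-cliques of G satisfies k ≥ (1 − δr)^{r-1} n^r ≥ n^r/2^{r-1}; in particular k > 0, so G contains at least one copy of K_r. -/

import Mathlib

/-! Call a clique *transversal* for a set `I` of parts if it has exactly one vertex in each part
of `I`. A transversal clique `s` for `I` extends to one for `I ∪ {j}` by any vertex of `V_j` adjacent
to all of `s`; each vertex of `s` misses at most `δn` vertices of `V_j`, so there are at least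
`(1 - |I|δ)n` such extensions, and every extension arises from exactly one `s`. Adding the parts one
at a time gives at least `∏_{k<r} (1 - kδ)n ≥ (1 - δr)^{r-1} n^r` transversal `r`-cliques, and
`δr ≤ 1/2` bounds this below by `n^r / 2^{r-1}`. -/

open Finset
open scoped Classical

theorem one_sub_mul_pow_le_prod_range {δ : ℝ} {m : ℕ} (hδ : 0 ≤ δ) (hm : m * δ ≤ 1) :
    (1 - m * δ) ^ (m - 1) ≤ ∏ k ∈ range m, (1 - k * δ) := by
  cases m with
  | zero => simp
  | succ m =>
    rw [prod_range_succ', Nat.add_sub_cancel]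
    calc (1 - ↑(m + 1) * δ) ^ m = ∏ _k ∈ range m, (1 - ↑(m + 1) * δ) := by
          rw [prod_const, card_range]
      _ ≤ ∏ k ∈ range m, (1 - ↑(k + 1) * δ) :=
          prod_le_prod (fun _ _ => by linarith) fun k hk => by
            have : k + 1 ≤ m + 1 := by have := mem_range.1 hk; omega
            gcongr
      _ = _ := by simp

namespace SimpleGraph

variable {V ι : Type*} [Fintype V] [DecidableEq V] [DecidableEq ι] (G : SimpleGraph V)

theorem one_sub_card_mul_le_card_filter_forall_adj {A s : Finset V} {n : ℕ} {δ : ℝ}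
    (hA : #A = n) (hs : ∀ v ∈ s, (1 - δ) * n ≤ #{u ∈ A | G.Adj v u}) :
    (1 - #s * δ) * n ≤ #{u ∈ A | ∀ v ∈ s, G.Adj v u} := by
  have hnonadj : ∀ v ∈ s, (#{u ∈ A | ¬ G.Adj v u} : ℝ) ≤ δ * n := by
    intro v hv
    have hsplit : (#{u ∈ A | G.Adj v u} : ℝ) + #{u ∈ A | ¬ G.Adj v u} = n := by
      exact_mod_cast (card_filter_add_card_filter_not (G.Adj v)).trans hA
    linarith [hs v hv]
  have hcover :
      A ⊆ {u ∈ A | ∀ v ∈ s, G.Adj v u} ∪ s.biUnion fun v => {u ∈ A | ¬ G.Adj v u} := by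
    intro u hu
    simp [hu, or_iff_not_imp_left]
  have hcard : (n : ℝ) ≤
      #{u ∈ A | ∀ v ∈ s, G.Adj v u} + ∑ v ∈ s, (#{u ∈ A | ¬ G.Adj v u} : ℝ) := by
    rw [← hA]
    exact_mod_cast (card_le_card hcover).trans
      ((card_union_le _ _).trans (Nat.add_le_add_left card_biUnion_le _))
  have hsum : ∑ v ∈ s, (#{u ∈ A | ¬ G.Adj v u} : ℝ) ≤ #s * (δ * n) := by
    simpa using sum_le_sum hnonadj
  linarith

variable (P : V → ι)

noncomputable def transversalCliques (I : Finset ι) : Finset (Finset V) :=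
  {s | G.IsClique (s : Set V) ∧ Set.InjOn P s ∧ s.image P = I}

variable {G P}

theorem mem_transversalCliques {I : Finset ι} {s : Finset V} :
    s ∈ G.transversalCliques P I ↔ G.IsClique (s : Set V) ∧ Set.InjOn P s ∧ s.image P = I := by
  simp [transversalCliques]

theorem transversalCliques_empty : G.transversalCliques P ∅ = {∅} := by
  ext s
  simp only [mem_transversalCliques, image_eq_empty, mem_singleton]
  exact ⟨fun h => h.2.2, by rintro rfl; simp⟩

theorem card_eq_of_mem_transversalCliques {I : Finset ι} {s : Finset V}
    (hs : s ∈ G.transversalCliques P I) : #s = #I := by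
  obtain ⟨-, hinj, himage⟩ := mem_transversalCliques.1 hs
  rw [← himage, card_image_of_injOn hinj]

theorem transversalCliques_subset_cliqueFinset (I : Finset ι) :
    G.transversalCliques P I ⊆ G.cliqueFinset #I := fun _ hs =>
  mem_cliqueFinset_iff.2 ⟨(mem_transversalCliques.1 hs).1, card_eq_of_mem_transversalCliques hs⟩

theorem insert_mem_transversalCliques {I : Finset ι} {s : Finset V} {u : V}
    (hs : s ∈ G.transversalCliques P I) (hu : P u ∉ I) (hadj : ∀ v ∈ s, G.Adj v u) :
    insert u s ∈ G.transversalCliques P (insert (P u) I) := by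
  obtain ⟨hclique, hinj, himage⟩ := mem_transversalCliques.1 hs
  have hus : u ∉ s := fun h => hu (himage ▸ mem_image_of_mem P h)
  refine mem_transversalCliques.2 ⟨?_, ?_, by rw [image_insert, himage]⟩
  · rw [coe_insert, isClique_insert]
    exact ⟨hclique, fun v hv _ => (hadj v hv).symm⟩
  · rw [coe_insert, Set.injOn_insert (by simpa using hus)]
    refine ⟨hinj, fun ⟨v, hv, hPv⟩ => hu ?_⟩
    rw [← hPv, ← himage]
    exact mem_image_of_mem P hv

theorem eq_filter_of_subset_of_mem_transversalCliques {I : Finset ι} {s t : Finset V}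
    (hs : s ∈ G.transversalCliques P I) (ht : Set.InjOn P t) (hst : s ⊆ t) :
    s = {v ∈ t | P v ∈ I} := by
  obtain ⟨-, -, himage⟩ := mem_transversalCliques.1 hs
  ext v
  refine ⟨fun hv => mem_filter.2 ⟨hst hv, himage ▸ mem_image_of_mem P hv⟩, fun hv => ?_⟩
  obtain ⟨hvt, hPv⟩ := mem_filter.1 hv
  obtain ⟨w, hw, hPw⟩ := mem_image.1 (himage ▸ hPv)
  rwa [← ht (hst hw) hvt hPw]

theorem card_transversalCliques_mul_le {I : Finset ι} {j : ι} {n : ℕ} {δ : ℝ} (hj : j ∉ I)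
    (hsize : #{v | P v = j} = n)
    (hdeg : ∀ v, P v ≠ j → (1 - δ) * n ≤ #{u | P u = j ∧ G.Adj v u}) :
    #(G.transversalCliques P I) * ((1 - #I * δ) * n) ≤
      #(G.transversalCliques P (insert j I)) := by
  have hext : ∀ s ∈ G.transversalCliques P I, (1 - #I * δ) * n ≤
      #((G.transversalCliques P (insert j I)).bipartiteAbove (· ⊆ ·) s) := by
    intro s hs
    have hPs : ∀ v ∈ s, P v ∈ I := fun v hv =>
      (mem_transversalCliques.1 hs).2.2 ▸ mem_image_of_mem P hv
    set C : Finset V := {u ∈ {v | P v = j} | ∀ v ∈ s, G.Adj v u}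
    have hC : (1 - #I * δ) * n ≤ #C := by
      rw [← card_eq_of_mem_transversalCliques hs]
      refine G.one_sub_card_mul_le_card_filter_forall_adj hsize fun v hv => ?_
      rw [filter_filter]
      exact hdeg v fun hPv => hj (hPv ▸ hPs v hv)
    have hCs : ∀ u ∈ C, P u = j ∧ u ∉ s := fun u hu => by
      have hPu : P u = j := by simpa [C] using (mem_filter.1 hu).1
      exact ⟨hPu, fun h => hj (hPu ▸ hPs u h)⟩
    refine hC.trans (Nat.cast_le.2 (card_le_card_of_injOn (insert · s) (fun u hu => ?_) ?_))
    · obtain ⟨hPu, -⟩ := hCs u hu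
      refine mem_filter.2 ⟨?_, subset_insert u s⟩
      rw [← hPu]
      exact insert_mem_transversalCliques hs (hPu ▸ hj) (mem_filter.1 hu).2
    · intro u hu u' hu' h
      have hmem : u ∈ insert u' s := by
        rw [← show insert u s = insert u' s from h]
        exact mem_insert_self u s
      exact (mem_insert.1 hmem).resolve_right (hCs u hu).2
  have hunique : ∀ t ∈ G.transversalCliques P (insert j I),
      (#((G.transversalCliques P I).bipartiteBelow (· ⊆ ·) t) : ℝ) ≤ 1 := by
    intro t ht
    have htinj := (mem_transversalCliques.1 ht).2.1
    refine Nat.cast_le_one.2 <| card_le_one.2 fun a ha b hb => ?_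
    obtain ⟨ha, hat⟩ := mem_filter.1 ha
    obtain ⟨hb, hbt⟩ := mem_filter.1 hb
    rw [eq_filter_of_subset_of_mem_transversalCliques ha htinj hat,
      eq_filter_of_subset_of_mem_transversalCliques hb htinj hbt]
  have h := card_nsmul_le_card_nsmul (fun a b : Finset V => a ⊆ b) hext hunique
  rwa [nsmul_eq_mul, nsmul_eq_mul, mul_one] at h

theorem prod_le_card_transversalCliques {n : ℕ} {δ : ℝ} (hδ : 0 ≤ δ)
    (hsize : ∀ i, #{v | P v = i} = n)
    (hdeg : ∀ j v, P v ≠ j → (1 - δ) * n ≤ #{u | P u = j ∧ G.Adj v u})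
    (I : Finset ι) (hI : #I * δ ≤ 1) :
    ∏ k ∈ range #I, (1 - k * δ) * n ≤ #(G.transversalCliques P I) := by
  induction I using Finset.induction_on with
  | empty => simp [transversalCliques_empty]
  | insert j I hj ih =>
    rw [card_insert_of_notMem hj, Nat.cast_succ] at hI
    rw [card_insert_of_notMem hj, prod_range_succ]
    have hI' : #I * δ ≤ 1 := by linarith
    calc _ ≤ #(G.transversalCliques P I) * ((1 - #I * δ) * n) :=
          mul_le_mul_of_nonneg_right (ih hI') (mul_nonneg (by linarith) n.cast_nonneg)
      _ ≤ _ := card_transversalCliques_mul_le hj (hsize j) (hdeg j)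

end SimpleGraph

theorem stmt_8_general {V : Type*} [Fintype V] [DecidableEq V] {r n : ℕ} (hn : 0 < n)
    (δ : ℝ) (hδ0 : 0 ≤ δ) (hδ1 : δ ≤ 1 / (2 * r))
    (G : SimpleGraph V) (P : V → Fin r)
    (hsize : ∀ i : Fin r, (Finset.univ.filter fun v => P v = i).card = n)
    (hdeg : ∀ (j : Fin r) (v : V), P v ≠ j →
      (1 - δ) * n ≤ ((Finset.univ.filter fun u => P u = j ∧ G.Adj v u).card : ℝ)) :
    (n : ℝ) ^ r / 2 ^ (r - 1) ≤ (1 - δ * r) ^ (r - 1) * (n : ℝ) ^ r ∧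
    (1 - δ * r) ^ (r - 1) * (n : ℝ) ^ r ≤ ((G.cliqueFinset r).card : ℝ) ∧
    0 < (G.cliqueFinset r).card := by
  have hδr : δ * r ≤ 1 / 2 := by
    calc δ * r ≤ 1 / (2 * r) * r := by gcongr
      _ = 1 / 2 * (r / r) := by ring
      _ ≤ 1 / 2 := mul_le_of_le_one_right (by norm_num) (div_self_le_one _)
  have hcount : (1 - δ * r) ^ (r - 1) * (n : ℝ) ^ r ≤ #(G.cliqueFinset r) := by
    have h := G.prod_le_card_transversalCliques hδ0 hsize hdeg univ
      (by rw [card_univ, Fintype.card_fin]; linarith)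
    rw [card_univ, Fintype.card_fin, prod_mul_distrib, prod_const, card_range] at h
    have hsub := G.transversalCliques_subset_cliqueFinset (P := P) univ
    rw [card_univ, Fintype.card_fin] at hsub
    calc _ ≤ (∏ k ∈ range r, (1 - k * δ)) * (n : ℝ) ^ r := by
          rw [mul_comm δ]
          gcongr
          exact one_sub_mul_pow_le_prod_range hδ0 (by linarith)
      _ ≤ _ := h
      _ ≤ _ := by exact_mod_cast card_le_card hsub
  have hhalf : (n : ℝ) ^ r / 2 ^ (r - 1) ≤ (1 - δ * r) ^ (r - 1) * (n : ℝ) ^ r := by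
    rw [div_eq_mul_inv, mul_comm, ← inv_pow, ← one_div]
    gcongr
    linarith
  have hpos : (0 : ℝ) < n ^ r / 2 ^ (r - 1) := by positivity
  exact ⟨hhalf, hcount, by exact_mod_cast hpos.trans_le (hhalf.trans hcount)⟩

/-- k ≥ (1 − δr)^{r−1} n^r ≥ n^r/2^{r−1}, so G has a copy of K_r. -/
theorem stmt_8 {V : Type*} [Fintype V] [DecidableEq V] {r n : ℕ} (hr : 3 ≤ r) (hn : 0 < n)
    (δ : ℝ) (hδ0 : 0 ≤ δ) (hδ1 : δ ≤ 1 / (2 * r))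
    (G : SimpleGraph V) (P : V → Fin r)
    (hpart : ∀ u v, G.Adj u v → P u ≠ P v)
    (hsize : ∀ i : Fin r, (Finset.univ.filter fun v => P v = i).card = n)
    (hdeg : ∀ (j : Fin r) (v : V), P v ≠ j →
      (1 - δ) * n ≤ ((Finset.univ.filter fun u => P u = j ∧ G.Adj v u).card : ℝ)) :
    (n : ℝ) ^ r / 2 ^ (r - 1) ≤ (1 - δ * r) ^ (r - 1) * (n : ℝ) ^ r ∧
    (1 - δ * r) ^ (r - 1) * (n : ℝ) ^ r ≤ ((G.cliqueFinset r).card : ℝ) ∧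
    0 < (G.cliqueFinset r).card :=
  stmt_8_general hn δ hδ0 hδ1 G P hsize hdeg
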